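/- arXiv:1201.2280 — 2 statements merged into one kernel-verified Lean document; each statement's English description precedes it below -/
import Mathlib

section
/- Let 0 < s_0, s_1 < ∞, 0 < p_0, p_1, q_0, q_1 ≤ ∞, 0 < θ < 1, and set s = (1−θ)s_0 + θs_1, 1/p = (1−θ)/p_0 + θ/p_1, 1/q = (1−θ)/q_0 + θ/q_1. Then for every f in the intersection of the Besov spaces B^{s_0}_{p_0,q_0}(Ω) and B^{s_1}_{p_1,q_1}(Ω) (defined via moduli of smoothness on a domain Ω), one has ‖f | B^s_{p,q}(Ω)‖ ≤ C ‖f | B^{s_0}_{p_0,q_0}(Ω)‖^{1−θ} · ‖f | B^{s_1}_{p_1,q_1}(Ω)‖^θ. -/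
/-!
Log-convexity of `L^p` norms in `1/p`: writing `|g| = |g|^(1-θ) |g|^θ`, Hölder's inequality gives
`‖g‖_p ≤ ‖g‖_{p₀}^(1-θ) ‖g‖_{p₁}^θ`. Applied to the differences `Δ_h^r f` this interpolates the
moduli of smoothness, so that
`t^(-s) ω_r(f,t)_p ≤ (t^(-s₀) ω_r(f,t)_{p₀})^(1-θ) (t^(-s₁) ω_r(f,t)_{p₁})^θ`,
and Hölder's inequality once more, now in `L^q(dt/t)` on `(0,1)`, interpolates the smoothness terms.
The two parts of the Besov norm are recombined by the two-term Hölder inequality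
`a₀^(1-θ) a₁^θ + b₀^(1-θ) b₁^θ ≤ (a₀+b₀)^(1-θ) (a₁+b₁)^θ`, so that one can take `C = 1`.
-/

open MeasureTheory Set Classical
open scoped ENNReal

noncomputable section

/-- The `r`-th difference of `f` with step `h` on `Ω`, set to zero unless all the points
`x, x+h, …, x+rh` belong to `Ω`. -/
def diffOn {n : ℕ} (r : ℕ) (f : EuclideanSpace ℝ (Fin n) → ℝ)
    (Ω : Set (EuclideanSpace ℝ (Fin n))) (h x : EuclideanSpace ℝ (Fin n)) : ℝ :=
  if ∀ i : ℕ, i ≤ r → x + (i : ℝ) • h ∈ Ω then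
    ∑ i ∈ Finset.range (r + 1), (-1 : ℝ) ^ (r - i) * (r.choose i : ℝ) * f (x + (i : ℝ) • h)
  else 0

/-- The `r`-th modulus of smoothness `ω_r(f,t,Ω)_p = sup_{‖h‖ ≤ t} ‖Δ_h^r f(·,Ω) | L_p(Ω)‖`. -/
def modulus {n : ℕ} (r : ℕ) (f : EuclideanSpace ℝ (Fin n) → ℝ)
    (Ω : Set (EuclideanSpace ℝ (Fin n))) (p : ℝ≥0∞) (t : ℝ) : ℝ≥0∞ :=
  ⨆ h : {h : EuclideanSpace ℝ (Fin n) // ‖h‖ ≤ t},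
    eLpNorm (diffOn r f Ω (h : EuclideanSpace ℝ (Fin n))) p (volume.restrict Ω)

/-- The Besov quasi-norm on `Ω` defined via moduli of smoothness,
`‖f|L_p(Ω)‖ + (∫_0^1 t^{-sq} ω_r(f,t,Ω)_p^q dt/t)^{1/q}`, with the usual
supremum modification if `q = ∞`. -/
def besovNorm {n : ℕ} (s : ℝ) (p q : ℝ≥0∞) (r : ℕ) (f : EuclideanSpace ℝ (Fin n) → ℝ)
    (Ω : Set (EuclideanSpace ℝ (Fin n))) : ℝ≥0∞ :=
  eLpNorm f p (volume.restrict Ω) +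
    (if q = ∞ then
      ⨆ t : {t : ℝ // t ∈ Ioo (0 : ℝ) 1},
        ENNReal.ofReal ((t : ℝ) ^ (-s)) * modulus r f Ω p (t : ℝ)
    else
      (∫⁻ t in Ioo (0 : ℝ) 1,
        (ENNReal.ofReal (t ^ (-s)) * modulus r f Ω p t) ^ q.toReal *
          ENNReal.ofReal t⁻¹) ^ (1 / q.toReal))

namespace ENNReal

variable {θ : ℝ} {p p₀ p₁ : ℝ≥0∞}

-- Also valid for infinite exponents, since `(∞ : ℝ≥0∞).toReal⁻¹ = 0`.
theorem toReal_inv_of_inv_interp (hθ : θ ∈ Icc 0 1) (hp₀ : p₀ ≠ 0) (hp₁ : p₁ ≠ 0)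
    (hp : p⁻¹ = ENNReal.ofReal (1 - θ) * p₀⁻¹ + ENNReal.ofReal θ * p₁⁻¹) :
    p.toReal⁻¹ = (1 - θ) * p₀.toReal⁻¹ + θ * p₁.toReal⁻¹ := by
  have := congrArg ENNReal.toReal hp
  rwa [toReal_add (by finiteness) (by finiteness), toReal_mul, toReal_mul,
    toReal_ofReal (sub_nonneg.2 hθ.2), toReal_ofReal hθ.1, toReal_inv, toReal_inv,
    toReal_inv] at this

theorem ne_zero_of_inv_interp (hp₀ : p₀ ≠ 0) (hp₁ : p₁ ≠ 0)
    (hp : p⁻¹ = ENNReal.ofReal (1 - θ) * p₀⁻¹ + ENNReal.ofReal θ * p₁⁻¹) : p ≠ 0 :=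
  inv_ne_top.1 (hp ▸ by finiteness)

theorem eq_top_of_inv_interp (hθ : θ ∈ Ioo 0 1)
    (hp : p⁻¹ = ENNReal.ofReal (1 - θ) * p₀⁻¹ + ENNReal.ofReal θ * p₁⁻¹) (hpt : p = ∞) :
    p₀ = ∞ ∧ p₁ = ∞ := by
  simpa [hpt, eq_comm (a := (0 : ℝ≥0∞)), hθ.1.not_ge, hθ.2.not_ge] using hp

theorem rpow_one_sub_mul_rpow_self (x : ℝ≥0∞) (hθ₀ : 0 ≤ θ) (hθ₁ : θ ≤ 1) :
    x ^ (1 - θ) * x ^ θ = x := by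
  rw [← rpow_add_of_nonneg _ _ (sub_nonneg.2 hθ₁) hθ₀, sub_add_cancel, rpow_one]

theorem mul_ofReal_eq_of_inv_eq (hθ : 0 < θ) (hp : p⁻¹ = ENNReal.ofReal θ * p₁⁻¹) :
    p * ENNReal.ofReal θ = p₁ := by
  rw [← inv_inv p, hp, ENNReal.mul_inv (by simp [hθ]) (by simp), inv_inv, mul_right_comm,
    ENNReal.inv_mul_cancel (by simpa using hθ) ofReal_ne_top, one_mul]

theorem rpow_mul_rpow_add_rpow_mul_rpow_le (hθ : θ ∈ Ioo 0 1) (a₀ a₁ b₀ b₁ : ℝ≥0∞) :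
    a₀ ^ (1 - θ) * a₁ ^ θ + b₀ ^ (1 - θ) * b₁ ^ θ ≤ (a₀ + b₀) ^ (1 - θ) * (a₁ + b₁) ^ θ := by
  have h1θ : 0 < 1 - θ := sub_pos.2 hθ.2
  have := ENNReal.inner_le_Lp_mul_Lq Finset.univ ![a₀ ^ (1 - θ), b₀ ^ (1 - θ)] ![a₁ ^ θ, b₁ ^ θ]
    (Real.HolderConjugate.one_sub_inv_inv hθ.1 hθ.2)
  simpa [Fin.sum_univ_two, ← ENNReal.rpow_mul, h1θ.ne', hθ.1.ne'] using this

end ENNReal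

namespace MeasureTheory

variable {α : Type*} [MeasurableSpace α] {μ : Measure α} {θ : ℝ} {p p₀ p₁ : ℝ≥0∞}

theorem eLpNorm_le_mul_eLpNorm_rpow_of_ae_le {F G : α → ℝ≥0∞} {c : ℝ≥0∞} (hθ : 0 < θ)
    (hG : AEMeasurable G μ) (h : ∀ᵐ x ∂μ, F x ≤ c * G x ^ θ) (p : ℝ≥0∞) :
    eLpNorm F p μ ≤ c * eLpNorm G (p * ENNReal.ofReal θ) μ ^ θ := by
  rw [← eLpNorm_enorm_rpow G hθ]
  exact eLpNorm_le_mul_eLpNorm_of_ae_le_mul'' p (hG.pow_const θ).aestronglyMeasurable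
    (by simpa using h)

theorem eLpNorm_le_of_ae_le_rpow_mul_rpow_of_ne_top {F G₀ G₁ : α → ℝ≥0∞}
    (hG₀ : AEMeasurable G₀ μ) (hG₁ : AEMeasurable G₁ μ) (hθ : θ ∈ Ioo 0 1)
    (hp₀ : p₀ ≠ 0) (hp₀t : p₀ ≠ ∞) (hp₁ : p₁ ≠ 0) (hp₁t : p₁ ≠ ∞)
    (hp : p⁻¹ = ENNReal.ofReal (1 - θ) * p₀⁻¹ + ENNReal.ofReal θ * p₁⁻¹)
    (h : ∀ᵐ x ∂μ, F x ≤ G₀ x ^ (1 - θ) * G₁ x ^ θ) :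
    eLpNorm F p μ ≤ eLpNorm G₀ p₀ μ ^ (1 - θ) * eLpNorm G₁ p₁ μ ^ θ := by
  obtain ⟨hθ0, hθ1⟩ := hθ
  have hP₀ : 0 < p₀.toReal := ENNReal.toReal_pos hp₀ hp₀t
  have hP₁ : 0 < p₁.toReal := ENNReal.toReal_pos hp₁ hp₁t
  have hP := ENNReal.toReal_inv_of_inv_interp ⟨hθ0.le, hθ1.le⟩ hp₀ hp₁ hp
  set P := p.toReal
  set P₀ := p₀.toReal
  set P₁ := p₁.toReal
  have hPpos : 0 < P := inv_pos.1 (hP ▸ by nlinarith [inv_pos.2 hP₀, inv_pos.2 hP₁])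
  have hp0 : p ≠ 0 := fun h ↦ by simp [P, h] at hPpos
  have hpt : p ≠ ∞ := fun h ↦ by simp [P, h] at hPpos
  -- Hölder with exponents `1/u`, `1/v`; the relation between `p, p₀, p₁` says `u + v = 1`
  set u := (1 - θ) * P / P₀
  set v := θ * P / P₁
  have huv : u + v = 1 := by
    have : P * P⁻¹ = 1 := mul_inv_cancel₀ hPpos.ne'
    rw [hP] at this
    simp only [u, v, div_eq_mul_inv]
    linear_combination this
  have hF : ∀ᵐ x ∂μ, F x ^ P ≤ (G₀ x ^ P₀) ^ u * (G₁ x ^ P₁) ^ v := by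
    filter_upwards [h] with x hx
    calc F x ^ P ≤ (G₀ x ^ (1 - θ) * G₁ x ^ θ) ^ P := by gcongr
      _ = (G₀ x ^ P₀) ^ u * (G₁ x ^ P₁) ^ v := by
        rw [ENNReal.mul_rpow_of_nonneg _ _ hPpos.le, ← ENNReal.rpow_mul, ← ENNReal.rpow_mul,
          ← ENNReal.rpow_mul, ← ENNReal.rpow_mul]
        congr 2 <;> simp only [u, v] <;> field_simp
  have hint : ∫⁻ x, F x ^ P ∂μ ≤ (∫⁻ x, G₀ x ^ P₀ ∂μ) ^ u * (∫⁻ x, G₁ x ^ P₁ ∂μ) ^ v :=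
    (lintegral_mono_ae hF).trans <| ENNReal.lintegral_mul_norm_pow_le (hG₀.pow_const _)
      (hG₁.pow_const _) (by positivity) (by positivity) huv
  simp only [eLpNorm_eq_lintegral_rpow_enorm_toReal hp0 hpt,
    eLpNorm_eq_lintegral_rpow_enorm_toReal hp₀ hp₀t,
    eLpNorm_eq_lintegral_rpow_enorm_toReal hp₁ hp₁t, enorm_eq_self]
  calc (∫⁻ x, F x ^ P ∂μ) ^ (1 / P)
      ≤ ((∫⁻ x, G₀ x ^ P₀ ∂μ) ^ u * (∫⁻ x, G₁ x ^ P₁ ∂μ) ^ v) ^ (1 / P) := by gcongr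
    _ = ((∫⁻ x, G₀ x ^ P₀ ∂μ) ^ (1 / P₀)) ^ (1 - θ) * ((∫⁻ x, G₁ x ^ P₁ ∂μ) ^ (1 / P₁)) ^ θ := by
      rw [ENNReal.mul_rpow_of_nonneg _ _ (by positivity), ← ENNReal.rpow_mul,
        ← ENNReal.rpow_mul, ← ENNReal.rpow_mul, ← ENNReal.rpow_mul]
      congr 2 <;> simp only [u, v] <;> field_simp

theorem eLpNorm_le_of_ae_le_rpow_mul_rpow_of_eq_top {F G₀ G₁ : α → ℝ≥0∞}
    (hG₁ : AEMeasurable G₁ μ) (hθ₀ : 0 < θ) (hθ₁ : θ ≤ 1) (hp : p⁻¹ = ENNReal.ofReal θ * p₁⁻¹)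
    (h : ∀ᵐ x ∂μ, F x ≤ G₀ x ^ (1 - θ) * G₁ x ^ θ) :
    eLpNorm F p μ ≤ eLpNorm G₀ ∞ μ ^ (1 - θ) * eLpNorm G₁ p₁ μ ^ θ := by
  rw [← ENNReal.mul_ofReal_eq_of_inv_eq hθ₀ hp]
  refine eLpNorm_le_mul_eLpNorm_rpow_of_ae_le hθ₀ hG₁ ?_ p
  filter_upwards [h, ENNReal.ae_le_essSup G₀] with x hx hG₀x
  refine hx.trans (mul_le_mul_left (ENNReal.rpow_le_rpow ?_ (sub_nonneg.2 hθ₁)) _)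
  simpa [eLpNormEssSup] using hG₀x

theorem eLpNorm_le_of_ae_le_rpow_mul_rpow {F G₀ G₁ : α → ℝ≥0∞}
    (hG₀ : AEMeasurable G₀ μ) (hG₁ : AEMeasurable G₁ μ) (hθ : θ ∈ Ioo 0 1)
    (hp₀ : p₀ ≠ 0) (hp₁ : p₁ ≠ 0)
    (hp : p⁻¹ = ENNReal.ofReal (1 - θ) * p₀⁻¹ + ENNReal.ofReal θ * p₁⁻¹)
    (h : ∀ᵐ x ∂μ, F x ≤ G₀ x ^ (1 - θ) * G₁ x ^ θ) :
    eLpNorm F p μ ≤ eLpNorm G₀ p₀ μ ^ (1 - θ) * eLpNorm G₁ p₁ μ ^ θ := by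
  obtain ⟨hθ0, hθ1⟩ := hθ
  rcases eq_or_ne p₀ ∞ with rfl | hp₀t
  · exact eLpNorm_le_of_ae_le_rpow_mul_rpow_of_eq_top hG₁ hθ0 hθ1.le (by simpa using hp) h
  rcases eq_or_ne p₁ ∞ with rfl | hp₁t
  · rw [mul_comm]
    have h' : ∀ᵐ x ∂μ, F x ≤ G₁ x ^ (1 - (1 - θ)) * G₀ x ^ (1 - θ) := by
      simpa only [sub_sub_cancel, mul_comm] using h
    simpa only [sub_sub_cancel] using eLpNorm_le_of_ae_le_rpow_mul_rpow_of_eq_top hG₀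
      (sub_pos.2 hθ1) (by linarith) (by simpa using hp) h'
  exact eLpNorm_le_of_ae_le_rpow_mul_rpow_of_ne_top hG₀ hG₁ ⟨hθ0, hθ1⟩ hp₀ hp₀t hp₁ hp₁t hp h

variable {ε : Type*} [TopologicalSpace ε] [ContinuousENorm ε]

theorem exists_measurable_le_enorm_eLpNorm_eq (g : α → ε) (hp : p ≠ 0) (hpt : p ≠ ∞) :
    ∃ K : α → ℝ≥0∞, Measurable K ∧ (∀ x, K x ≤ ‖g x‖ₑ) ∧ eLpNorm K p μ = eLpNorm g p μ := by
  have hP : 0 < p.toReal := ENNReal.toReal_pos hp hpt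
  obtain ⟨H, hH, hHg, hint⟩ := exists_measurable_le_lintegral_eq μ fun x ↦ ‖g x‖ₑ ^ p.toReal
  refine ⟨fun x ↦ H x ^ p.toReal⁻¹, hH.pow_const _, fun x ↦ ?_, ?_⟩
  · simpa [ENNReal.rpow_rpow_inv hP.ne'] using
      ENNReal.rpow_le_rpow (hHg x) (inv_nonneg.2 hP.le)
  · simp [eLpNorm_eq_lintegral_rpow_enorm_toReal hp hpt, ENNReal.rpow_inv_rpow hP.ne', hint]

theorem eLpNorm_le_eLpNorm_rpow_mul_eLpNorm_rpow (g : α → ε) (hθ : θ ∈ Ioo 0 1)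
    (hp₀ : p₀ ≠ 0) (hp₁ : p₁ ≠ 0)
    (hp : p⁻¹ = ENNReal.ofReal (1 - θ) * p₀⁻¹ + ENNReal.ofReal θ * p₁⁻¹) :
    eLpNorm g p μ ≤ eLpNorm g p₀ μ ^ (1 - θ) * eLpNorm g p₁ μ ^ θ := by
  rcases eq_or_ne p ∞ with hpt | hpt
  · obtain ⟨rfl, rfl⟩ := ENNReal.eq_top_of_inv_interp hθ hp hpt
    rw [hpt, ENNReal.rpow_one_sub_mul_rpow_self _ hθ.1.le hθ.2.le]
  -- `g` need not be measurable: pass to a measurable minorant of `‖g‖ₑ` with the same `L^p` norm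
  obtain ⟨K, hK, hKg, hKp⟩ := exists_measurable_le_enorm_eLpNorm_eq (μ := μ) g
    (ENNReal.ne_zero_of_inv_interp hp₀ hp₁ hp) hpt
  calc eLpNorm g p μ = eLpNorm K p μ := hKp.symm
    _ ≤ eLpNorm K p₀ μ ^ (1 - θ) * eLpNorm K p₁ μ ^ θ :=
      eLpNorm_le_of_ae_le_rpow_mul_rpow hK.aemeasurable hK.aemeasurable hθ hp₀ hp₁ hp
        (.of_forall fun x ↦ (ENNReal.rpow_one_sub_mul_rpow_self _ hθ.1.le hθ.2.le).ge)
    _ ≤ eLpNorm g p₀ μ ^ (1 - θ) * eLpNorm g p₁ μ ^ θ :=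
      mul_le_mul' (ENNReal.rpow_le_rpow (eLpNorm_mono_enorm hKg) (sub_nonneg.2 hθ.2.le))
        (ENNReal.rpow_le_rpow (eLpNorm_mono_enorm hKg) hθ.1.le)

end MeasureTheory

def dtOverT : Measure ℝ := (volume.restrict (Ioo 0 1)).withDensity fun t ↦ ENNReal.ofReal t⁻¹

theorem ae_dtOverT_mem_Ioo : ∀ᵐ t ∂dtOverT, t ∈ Ioo (0 : ℝ) 1 :=
  withDensity_absolutelyContinuous _ _ (ae_restrict_mem measurableSet_Ioo)

theorem eLpNorm_dtOverT_eq_lintegral {G : ℝ → ℝ≥0∞} (hG : Measurable G) {q : ℝ≥0∞}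
    (hq : q ≠ 0) (hqt : q ≠ ∞) :
    eLpNorm G q dtOverT =
      (∫⁻ t in Ioo (0 : ℝ) 1, G t ^ q.toReal * ENNReal.ofReal t⁻¹) ^ (1 / q.toReal) := by
  rw [eLpNorm_eq_lintegral_rpow_enorm_toReal hq hqt, dtOverT,
    lintegral_withDensity_eq_lintegral_mul _ measurable_inv.ennreal_ofReal
      (by simpa using hG.pow_const _)]
  simp only [enorm_eq_self, Pi.mul_apply, mul_comm]

theorem eLpNorm_top_dtOverT_le (G : ℝ → ℝ≥0∞) :
    eLpNorm G ∞ dtOverT ≤ ⨆ t : {t : ℝ // t ∈ Ioo (0 : ℝ) 1}, G t := by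
  refine essSup_le_of_ae_le _ ?_
  filter_upwards [ae_dtOverT_mem_Ioo] with t ht
  exact le_iSup_of_le (⟨t, ht⟩ : {t : ℝ // t ∈ Ioo (0 : ℝ) 1}) le_rfl

section Besov

variable {n : ℕ} {r : ℕ} {f : EuclideanSpace ℝ (Fin n) → ℝ} {Ω : Set (EuclideanSpace ℝ (Fin n))}
  {θ s s₀ s₁ : ℝ} {p p₀ p₁ q q₀ q₁ : ℝ≥0∞}

theorem modulus_mono : Monotone (modulus r f Ω p) := fun _ _ hle ↦
  iSup_le fun h ↦ le_iSup_of_le ⟨h, h.2.trans hle⟩ le_rfl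

theorem modulus_le_rpow_mul_rpow (hθ : θ ∈ Ioo 0 1) (hp₀ : p₀ ≠ 0) (hp₁ : p₁ ≠ 0)
    (hp : p⁻¹ = ENNReal.ofReal (1 - θ) * p₀⁻¹ + ENNReal.ofReal θ * p₁⁻¹) (t : ℝ) :
    modulus r f Ω p t ≤ modulus r f Ω p₀ t ^ (1 - θ) * modulus r f Ω p₁ t ^ θ :=
  iSup_le fun h ↦ (eLpNorm_le_eLpNorm_rpow_mul_eLpNorm_rpow _ hθ hp₀ hp₁ hp).trans <|
    mul_le_mul' (ENNReal.rpow_le_rpow (le_iSup_of_le h le_rfl) (sub_nonneg.2 hθ.2.le))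
      (ENNReal.rpow_le_rpow (le_iSup_of_le h le_rfl) hθ.1.le)

def weightedModulus (s : ℝ) (r : ℕ) (f : EuclideanSpace ℝ (Fin n) → ℝ)
    (Ω : Set (EuclideanSpace ℝ (Fin n))) (p : ℝ≥0∞) (t : ℝ) : ℝ≥0∞ :=
  ENNReal.ofReal (t ^ (-s)) * modulus r f Ω p t

theorem measurable_weightedModulus : Measurable (weightedModulus s r f Ω p) :=
  (measurable_id.pow_const _).ennreal_ofReal.mul modulus_mono.measurable

theorem weightedModulus_le_rpow_mul_rpow (hθ : θ ∈ Ioo 0 1) (hp₀ : p₀ ≠ 0) (hp₁ : p₁ ≠ 0)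
    (hs : s = (1 - θ) * s₀ + θ * s₁)
    (hp : p⁻¹ = ENNReal.ofReal (1 - θ) * p₀⁻¹ + ENNReal.ofReal θ * p₁⁻¹) {t : ℝ} (ht : 0 < t) :
    weightedModulus s r f Ω p t ≤
      weightedModulus s₀ r f Ω p₀ t ^ (1 - θ) * weightedModulus s₁ r f Ω p₁ t ^ θ := by
  have h_weight : ENNReal.ofReal (t ^ (-s)) =
      ENNReal.ofReal (t ^ (-s₀)) ^ (1 - θ) * ENNReal.ofReal (t ^ (-s₁)) ^ θ := by
    rw [ENNReal.ofReal_rpow_of_pos (by positivity), ENNReal.ofReal_rpow_of_pos (by positivity),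
      ← ENNReal.ofReal_mul (by positivity), ← Real.rpow_mul ht.le, ← Real.rpow_mul ht.le,
      ← Real.rpow_add ht, hs]
    ring_nf
  calc weightedModulus s r f Ω p t
      ≤ ENNReal.ofReal (t ^ (-s)) * (modulus r f Ω p₀ t ^ (1 - θ) * modulus r f Ω p₁ t ^ θ) :=
        mul_le_mul' le_rfl (modulus_le_rpow_mul_rpow hθ hp₀ hp₁ hp t)
    _ = weightedModulus s₀ r f Ω p₀ t ^ (1 - θ) * weightedModulus s₁ r f Ω p₁ t ^ θ := by
        rw [weightedModulus, weightedModulus, ENNReal.mul_rpow_of_nonneg _ _ (sub_nonneg.2 hθ.2.le),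
          ENNReal.mul_rpow_of_nonneg _ _ hθ.1.le, h_weight]
        ring

def besovSeminorm (s : ℝ) (p q : ℝ≥0∞) (r : ℕ) (f : EuclideanSpace ℝ (Fin n) → ℝ)
    (Ω : Set (EuclideanSpace ℝ (Fin n))) : ℝ≥0∞ :=
  if q = ∞ then ⨆ t : {t : ℝ // t ∈ Ioo (0 : ℝ) 1}, weightedModulus s r f Ω p t
  else eLpNorm (weightedModulus s r f Ω p) q dtOverT

theorem besovNorm_eq (hq : q ≠ 0) :
    besovNorm s p q r f Ω = eLpNorm f p (volume.restrict Ω) + besovSeminorm s p q r f Ω := by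
  rw [besovNorm, besovSeminorm]
  split_ifs with hqt
  · rfl
  · rw [eLpNorm_dtOverT_eq_lintegral measurable_weightedModulus hq hqt]
    rfl

theorem eLpNorm_weightedModulus_le_besovSeminorm :
    eLpNorm (weightedModulus s r f Ω p) q dtOverT ≤ besovSeminorm s p q r f Ω := by
  rw [besovSeminorm]
  split_ifs with hqt
  · exact hqt ▸ eLpNorm_top_dtOverT_le _
  · exact le_rfl

theorem besovSeminorm_le_rpow_mul_rpow (hθ : θ ∈ Ioo 0 1) (hp₀ : p₀ ≠ 0) (hp₁ : p₁ ≠ 0)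
    (hq₀ : q₀ ≠ 0) (hq₁ : q₁ ≠ 0) (hs : s = (1 - θ) * s₀ + θ * s₁)
    (hp : p⁻¹ = ENNReal.ofReal (1 - θ) * p₀⁻¹ + ENNReal.ofReal θ * p₁⁻¹)
    (hq : q⁻¹ = ENNReal.ofReal (1 - θ) * q₀⁻¹ + ENNReal.ofReal θ * q₁⁻¹) :
    besovSeminorm s p q r f Ω ≤
      besovSeminorm s₀ p₀ q₀ r f Ω ^ (1 - θ) * besovSeminorm s₁ p₁ q₁ r f Ω ^ θ := by
  have h_pointwise {t : ℝ} (ht : t ∈ Ioo (0 : ℝ) 1) :=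
    weightedModulus_le_rpow_mul_rpow (r := r) (f := f) (Ω := Ω) hθ hp₀ hp₁ hs hp ht.1
  rcases eq_or_ne q ∞ with hqt | hqt
  · obtain ⟨hq₀t, hq₁t⟩ := ENNReal.eq_top_of_inv_interp hθ hq hqt
    simp only [besovSeminorm, if_pos hqt, if_pos hq₀t, if_pos hq₁t]
    exact iSup_le fun t ↦ (h_pointwise t.2).trans <| mul_le_mul'
      (ENNReal.rpow_le_rpow (le_iSup_of_le t le_rfl) (sub_nonneg.2 hθ.2.le))
      (ENNReal.rpow_le_rpow (le_iSup_of_le t le_rfl) hθ.1.le)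
  rw [besovSeminorm, if_neg hqt]
  calc eLpNorm (weightedModulus s r f Ω p) q dtOverT
      ≤ eLpNorm (weightedModulus s₀ r f Ω p₀) q₀ dtOverT ^ (1 - θ) *
          eLpNorm (weightedModulus s₁ r f Ω p₁) q₁ dtOverT ^ θ :=
        eLpNorm_le_of_ae_le_rpow_mul_rpow measurable_weightedModulus.aemeasurable
          measurable_weightedModulus.aemeasurable hθ hq₀ hq₁ hq
          (ae_dtOverT_mem_Ioo.mono fun _ ↦ h_pointwise)
    _ ≤ besovSeminorm s₀ p₀ q₀ r f Ω ^ (1 - θ) * besovSeminorm s₁ p₁ q₁ r f Ω ^ θ :=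
        mul_le_mul' (ENNReal.rpow_le_rpow eLpNorm_weightedModulus_le_besovSeminorm
            (sub_nonneg.2 hθ.2.le))
          (ENNReal.rpow_le_rpow eLpNorm_weightedModulus_le_besovSeminorm hθ.1.le)

end Besov

theorem stmt_4_general {n : ℕ} (Ω : Set (EuclideanSpace ℝ (Fin n)))
    (s₀ s₁ θ : ℝ) (p₀ p₁ q₀ q₁ : ℝ≥0∞)
    (hp₀ : 0 < p₀) (hp₁ : 0 < p₁) (hq₀ : 0 < q₀) (hq₁ : 0 < q₁)
    (hθ : θ ∈ Ioo (0 : ℝ) 1)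
    (s : ℝ) (p q : ℝ≥0∞)
    (hs : s = (1 - θ) * s₀ + θ * s₁)
    (hp : p⁻¹ = ENNReal.ofReal (1 - θ) * p₀⁻¹ + ENNReal.ofReal θ * p₁⁻¹)
    (hq : q⁻¹ = ENNReal.ofReal (1 - θ) * q₀⁻¹ + ENNReal.ofReal θ * q₁⁻¹)
    (r : ℕ) :
    ∃ C : ℝ≥0∞, 0 < C ∧ C ≠ ∞ ∧ ∀ f : EuclideanSpace ℝ (Fin n) → ℝ,
      besovNorm s₀ p₀ q₀ r f Ω ≠ ∞ → besovNorm s₁ p₁ q₁ r f Ω ≠ ∞ →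
        besovNorm s p q r f Ω ≤
          C * besovNorm s₀ p₀ q₀ r f Ω ^ (1 - θ) * besovNorm s₁ p₁ q₁ r f Ω ^ θ := by
  refine ⟨1, one_pos, ENNReal.one_ne_top, fun f _ _ ↦ ?_⟩
  rw [one_mul, besovNorm_eq (ENNReal.ne_zero_of_inv_interp hq₀.ne' hq₁.ne' hq),
    besovNorm_eq hq₀.ne', besovNorm_eq hq₁.ne']
  exact (add_le_add
    (eLpNorm_le_eLpNorm_rpow_mul_eLpNorm_rpow f hθ hp₀.ne' hp₁.ne' hp)
    (besovSeminorm_le_rpow_mul_rpow hθ hp₀.ne' hp₁.ne' hq₀.ne' hq₁.ne' hs hp hq)).trans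
    (ENNReal.rpow_mul_rpow_add_rpow_mul_rpow_le hθ _ _ _ _)

/-- Gagliardo–Nirenberg type inequality for Besov spaces defined by differences on a
domain `Ω`: with `s = (1-θ)s₀ + θs₁`, `1/p = (1-θ)/p₀ + θ/p₁`, `1/q = (1-θ)/q₀ + θ/q₁`,
`‖f|B^s_{p,q}(Ω)‖ ≤ C ‖f|B^{s₀}_{p₀,q₀}(Ω)‖^{1-θ} ‖f|B^{s₁}_{p₁,q₁}(Ω)‖^θ`
for all `f` in the intersection of the two spaces. -/
theorem stmt_4 {n : ℕ} (Ω : Set (EuclideanSpace ℝ (Fin n))) (hΩ : MeasurableSet Ω)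
    (s₀ s₁ θ : ℝ) (p₀ p₁ q₀ q₁ : ℝ≥0∞)
    (hs₀ : 0 < s₀) (hs₁ : 0 < s₁)
    (hp₀ : 0 < p₀) (hp₁ : 0 < p₁) (hq₀ : 0 < q₀) (hq₁ : 0 < q₁)
    (hθ : θ ∈ Ioo (0 : ℝ) 1)
    (s : ℝ) (p q : ℝ≥0∞)
    (hs : s = (1 - θ) * s₀ + θ * s₁)
    (hp : p⁻¹ = ENNReal.ofReal (1 - θ) * p₀⁻¹ + ENNReal.ofReal θ * p₁⁻¹)
    (hq : q⁻¹ = ENNReal.ofReal (1 - θ) * q₀⁻¹ + ENNReal.ofReal θ * q₁⁻¹)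
    (r : ℕ) (hr : max s₀ s₁ < r) :
    ∃ C : ℝ≥0∞, 0 < C ∧ C ≠ ∞ ∧ ∀ f : EuclideanSpace ℝ (Fin n) → ℝ,
      besovNorm s₀ p₀ q₀ r f Ω ≠ ∞ → besovNorm s₁ p₁ q₁ r f Ω ≠ ∞ →
        besovNorm s p q r f Ω ≤
          C * besovNorm s₀ p₀ q₀ r f Ω ^ (1 - θ) * besovNorm s₁ p₁ q₁ r f Ω ^ θ :=
  stmt_4_general Ω s₀ s₁ θ p₀ p₁ q₀ q₁ hp₀ hp₁ hq₀ hq₁ hθ s p q hs hp hq r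

end
end

section
/- Let ψ : ℝ^{n−1} → ℝ be Lipschitz and Ω = {(x', x_n) : x_n > ψ(x'), |x'| < 1}. Fix an integer k ≥ 1, h ∈ ℝ^n with 0 < |h| ≤ 1, and j ∈ ℕ_0. Define Ω^h = {x ∈ Ω : [x, x+kh] ⊂ Ω} and Ω^h_j = {x ∈ Ω^h : 2^{−j} ≤ min_{y ∈ [x,x+kh]} dist(y, ∂Ω) ≤ 2^{−j+1}}. Then the Lebesgue measure of Ω^h_j satisfies |Ω^h_j| ≤ C 2^{−j} with a constant C independent of j and h. -/
/-!
If `x` and `y` both lie in `Ω^h_j`, some point `z` of `[y, y + kh]` is within `2^{1-j}` of `Γ`,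
and its translate `z + (x - y)` lies on `[x, x + kh] ⊂ Ω`, hence above the graph. As the height
of a point above `Γ` is at most `(1 + L)` times its distance to `Γ`, the Lipschitz bound on `ψ`
gives `y_n - x_n ≤ (1 + L) 2^{1-j} + L |y' - x'|`. So each vertical section of `Ω^h_j` has
length at most `(1 + L) 2^{1-j}`, and Fubini over the cube `|x'| ≤ 1` bounds the measure.
-/

open Metric MeasureTheory Set
open scoped NNReal ENNReal

noncomputable section

/-- Projection of a point of `ℝ^{n+1}` onto its first `n` Euclidean coordinates. -/
def projE {n : ℕ} (x : EuclideanSpace ℝ (Fin (n + 1))) : EuclideanSpace ℝ (Fin n) :=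
  WithLp.toLp 2 (fun i : Fin n => x i.castSucc)

/-- The bounded Lipschitz model domain `Ω = {(x',x_n) : x_n > ψ(x'), |x'| < 1}`. -/
def lipDom {n : ℕ} (ψ : EuclideanSpace ℝ (Fin n) → ℝ) :
    Set (EuclideanSpace ℝ (Fin (n + 1))) :=
  {x | ψ (projE x) < x (Fin.last n) ∧ ‖projE x‖ < 1}

/-- Its boundary graph `Γ = {(x', ψ(x')) : |x'| < 1}`. -/
def lipGraph {n : ℕ} (ψ : EuclideanSpace ℝ (Fin n) → ℝ) :
    Set (EuclideanSpace ℝ (Fin (n + 1))) :=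
  {x | x (Fin.last n) = ψ (projE x) ∧ ‖projE x‖ < 1}

section Coordinates

variable {n : ℕ}

lemma projE_sub (x y : EuclideanSpace ℝ (Fin (n + 1))) : projE (x - y) = projE x - projE y :=
  rfl

lemma projE_single_last (a : ℝ) : projE (EuclideanSpace.single (Fin.last n) a) = 0 := by
  ext i
  simp [projE]

@[fun_prop]
lemma continuous_projE : Continuous (projE (n := n)) := by
  unfold projE
  fun_prop

lemma norm_projE_le (x : EuclideanSpace ℝ (Fin (n + 1))) : ‖projE x‖ ≤ ‖x‖ := by
  rw [EuclideanSpace.norm_eq, EuclideanSpace.norm_eq, Fin.sum_univ_castSucc]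
  exact Real.sqrt_le_sqrt (le_add_of_nonneg_right (sq_nonneg _))

end Coordinates

section Graph

variable {n : ℕ} {ψ : EuclideanSpace ℝ (Fin n) → ℝ} {L : ℝ≥0}

lemma lipGraph_nonempty (ψ : EuclideanSpace ℝ (Fin n) → ℝ) : (lipGraph ψ).Nonempty :=
  ⟨EuclideanSpace.single (Fin.last n) (ψ 0), by simp [lipGraph, projE_single_last]⟩

lemma LipschitzWith.last_sub_le_mul_infDist_lipGraph (hψ : LipschitzWith L ψ)
    (x : EuclideanSpace ℝ (Fin (n + 1))) :
    x (Fin.last n) - ψ (projE x) ≤ (1 + L) * infDist x (lipGraph ψ) := by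
  rw [← div_le_iff₀' (by positivity), le_infDist (lipGraph_nonempty ψ)]
  rintro g ⟨hg, -⟩
  rw [div_le_iff₀' (by positivity), dist_eq_norm]
  have hlast : x (Fin.last n) - g (Fin.last n) ≤ ‖x - g‖ :=
    (le_abs_self _).trans (PiLp.norm_apply_le (x - g) _)
  have hψ' : ψ (projE g) - ψ (projE x) ≤ L * ‖x - g‖ :=
    calc ψ (projE g) - ψ (projE x) ≤ L * dist (projE g) (projE x) :=
          (le_abs_self _).trans (hψ.dist_le_mul _ _)
      _ ≤ L * ‖x - g‖ := by
          rw [dist_comm, dist_eq_norm, ← projE_sub]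
          gcongr
          exact norm_projE_le _
  linarith

lemma LipschitzWith.last_sub_le_of_mem_lipDom (hψ : LipschitzWith L ψ)
    {w : EuclideanSpace ℝ (Fin (n + 1))} (hw : w ∈ lipDom ψ) (z : EuclideanSpace ℝ (Fin (n + 1))) :
    z (Fin.last n) - w (Fin.last n) ≤
      (1 + L) * infDist z (lipGraph ψ) + L * ‖projE z - projE w‖ := by
  have hz := hψ.last_sub_le_mul_infDist_lipGraph z
  have hzw : ψ (projE z) - ψ (projE w) ≤ L * ‖projE z - projE w‖ :=
    (le_abs_self _).trans ((hψ.dist_le_mul _ _).trans_eq (by rw [dist_eq_norm]))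
  linarith [hw.1]

lemma LipschitzWith.last_sub_le_of_segment_subset_lipDom (hψ : LipschitzWith L ψ)
    {x y z c : EuclideanSpace ℝ (Fin (n + 1))} (hx : segment ℝ x (x + c) ⊆ lipDom ψ)
    (hz : z ∈ segment ℝ y (y + c)) :
    y (Fin.last n) - x (Fin.last n) ≤
      (1 + L) * infDist z (lipGraph ψ) + L * ‖projE y - projE x‖ := by
  have hw : x - y + z ∈ segment ℝ x (x + c) := by
    have := (mem_segment_translate ℝ (x - y)).2 hz
    rwa [sub_add_cancel, ← add_assoc, sub_add_cancel] at this
  have key := hψ.last_sub_le_of_mem_lipDom (hx hw) z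
  have hzw : z - (x - y + z) = y - x := by abel
  rwa [← PiLp.sub_apply, hzw, ← projE_sub, hzw, PiLp.sub_apply] at key

end Graph

section Volume

lemma volume_prod_le_of_dist_fst_le {β : Type*} [MeasurableSpace β] (μ : Measure β) [SFinite μ]
    {T : Set (ℝ × β)} (hT : MeasurableSet T) {B : Set β} (hTB : ∀ p ∈ T, p.2 ∈ B) {ℓ : ℝ}
    (hfib : ∀ p ∈ T, ∀ q ∈ T, p.2 = q.2 → dist p.1 q.1 ≤ ℓ) :
    volume.prod μ T ≤ ENNReal.ofReal ℓ * μ B := by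
  rw [Measure.prod_apply_symm hT]
  refine (lintegral_mono fun b => ?_).trans (lintegral_indicator_const_le B _)
  by_cases hb : b ∈ B
  · rw [indicator_of_mem hb]
    refine (Real.volume_le_diam _).trans (ediam_le_of_forall_dist_le fun s hs t ht => ?_)
    exact hfib _ hs _ ht rfl
  · have hempty : (fun t => (t, b)) ⁻¹' T = ∅ :=
      eq_empty_of_forall_notMem fun t ht => hb (hTB _ ht)
    simp [hempty]

def splitLast (n : ℕ) : EuclideanSpace ℝ (Fin (n + 1)) ≃ᵐ ℝ × (Fin n → ℝ) :=
  (MeasurableEquiv.toLp 2 (Fin (n + 1) → ℝ)).symm.trans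
    (MeasurableEquiv.piFinSuccAbove (fun _ : Fin (n + 1) => ℝ) (Fin.last n))

lemma splitLast_apply {n : ℕ} (x : EuclideanSpace ℝ (Fin (n + 1))) :
    splitLast n x = (x (Fin.last n), (projE x).ofLp) := by
  change (x (Fin.last n), fun i => x ((Fin.last n).succAbove i)) = _
  simp only [Fin.succAbove_last]
  rfl

lemma measurePreserving_splitLast (n : ℕ) :
    MeasurePreserving (splitLast n) volume (volume.prod volume) :=
  (measurePreserving_piFinSuccAbove (fun _ : Fin (n + 1) => (volume : Measure ℝ))
    (Fin.last n)).comp (EuclideanSpace.volume_preserving_symm_measurableEquiv_toLp (Fin (n + 1)))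

/-- Passing to `closure S` makes the set measurable; the hypothesis on pairs survives because it
is a closed condition, and it makes every vertical fibre of length at most `ℓ`. -/
lemma volume_le_of_last_sub_le {n : ℕ} {S : Set (EuclideanSpace ℝ (Fin (n + 1)))} {ℓ K : ℝ}
    (hS : ∀ x ∈ S, ‖projE x‖ ≤ 1)
    (hspread : ∀ x ∈ S, ∀ y ∈ S, y (Fin.last n) - x (Fin.last n) ≤ ℓ + K * ‖projE y - projE x‖) :
    volume S ≤ ENNReal.ofReal (2 ^ n * ℓ) := by
  have hS' : ∀ x ∈ closure S, ‖projE x‖ ≤ 1 := fun x hx => by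
    simpa using map_mem_closure (f := fun x => ‖projE x‖) (by fun_prop) hx (t := Iic 1) hS
  have hspread' : ∀ x ∈ closure S, ∀ y ∈ closure S,
      y (Fin.last n) - x (Fin.last n) - K * ‖projE y - projE x‖ ≤ ℓ := fun x hx y hy => by
    rw [← mem_Iic, ← closure_Iic]
    refine map_mem_closure₂
      (f := fun a b => b (Fin.last n) - a (Fin.last n) - K * ‖projE b - projE a‖) ?_ hx hy
      fun a ha b hb => ?_
    · fun_prop
    · rw [mem_Iic]
      linarith [hspread a ha b hb]
  have hU : MeasurableSet (splitLast n '' closure S) :=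
    (splitLast n).measurableSet_image.2 isClosed_closure.measurableSet
  calc volume S ≤ volume (closure S) := measure_mono subset_closure
    _ = volume.prod volume (splitLast n '' closure S) := by
        rw [← (measurePreserving_splitLast n).measure_preimage_equiv,
          preimage_image_eq _ (splitLast n).injective]
    _ ≤ ENNReal.ofReal ℓ * volume (closedBall (0 : Fin n → ℝ) 1) := by
        refine volume_prod_le_of_dist_fst_le _ hU ?_ ?_
        · rintro _ ⟨x, hx, rfl⟩
          rw [splitLast_apply, mem_closedBall_zero_iff, pi_norm_le_iff_of_nonneg zero_le_one]
          exact fun i => (PiLp.norm_apply_le (projE x) i).trans (hS' x hx)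
        · rintro _ ⟨x, hx, rfl⟩ _ ⟨y, hy, rfl⟩ hxy
          simp only [splitLast_apply] at hxy ⊢
          have hxy' : projE x = projE y := congrArg (WithLp.toLp 2) hxy
          have h₁ := hspread' x hx y hy
          have h₂ := hspread' y hy x hx
          rw [hxy', sub_self, norm_zero, mul_zero, sub_zero] at h₁ h₂
          rw [Real.dist_eq, abs_le]
          constructor <;> linarith
    _ = ENNReal.ofReal (2 ^ n * ℓ) := by
        rw [Real.volume_pi_closedBall _ zero_le_one, ← ENNReal.ofReal_mul' (by positivity)]
        simp [mul_comm]

end Volume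

theorem stmt_6_general (n : ℕ) (ψ : EuclideanSpace ℝ (Fin n) → ℝ) (L : ℝ≥0)
    (hψ : LipschitzWith L ψ) (k : ℕ) :
    ∃ C : ℝ, 0 < C ∧ ∀ h : EuclideanSpace ℝ (Fin (n + 1)), 0 < ‖h‖ → ‖h‖ ≤ 1 → ∀ j : ℕ,
      volume {x : EuclideanSpace ℝ (Fin (n + 1)) |
          x ∈ lipDom ψ ∧ segment ℝ x (x + (k : ℝ) • h) ⊆ lipDom ψ ∧
          (∀ y ∈ segment ℝ x (x + (k : ℝ) • h), (2 : ℝ) ^ (-(j : ℤ)) ≤ infDist y (lipGraph ψ)) ∧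
          (∃ y ∈ segment ℝ x (x + (k : ℝ) • h), infDist y (lipGraph ψ) ≤ (2 : ℝ) ^ (1 - (j : ℤ)))}
        ≤ ENNReal.ofReal (C * (2 : ℝ) ^ (-(j : ℤ))) := by
  refine ⟨2 ^ (n + 1) * (1 + L), by positivity, fun h _ _ j => ?_⟩
  refine (volume_le_of_last_sub_le (ℓ := (1 + L) * 2 ^ (1 - (j : ℤ))) (K := L)
    (fun x hx => hx.1.2.le) ?_).trans_eq ?_
  · rintro x ⟨-, hx, -, -⟩ y ⟨-, -, -, z, hz, hzj⟩
    calc y (Fin.last n) - x (Fin.last n)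
        ≤ (1 + L) * infDist z (lipGraph ψ) + L * ‖projE y - projE x‖ :=
          hψ.last_sub_le_of_segment_subset_lipDom hx hz
      _ ≤ (1 + L) * 2 ^ (1 - (j : ℤ)) + L * ‖projE y - projE x‖ := by gcongr
  · rw [sub_eq_add_neg, zpow_add₀ two_ne_zero, zpow_one]
    ring_nf

/-- Geometric measure estimate for Lipschitz domains: with
`Ω^h = {x ∈ Ω : [x,x+kh] ⊂ Ω}` and
`Ω^h_j = {x ∈ Ω^h : 2^{-j} ≤ min_{y∈[x,x+kh]} dist(y,Γ) ≤ 2^{-j+1}}`, the Lebesgue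
measure of `Ω^h_j` is at most `C 2^{-j}`, with `C` independent of `j` and `h`. -/
theorem stmt_6 (n : ℕ) (ψ : EuclideanSpace ℝ (Fin n) → ℝ) (L : ℝ≥0)
    (hψ : LipschitzWith L ψ) (k : ℕ) (hk : 1 ≤ k) :
    ∃ C : ℝ, 0 < C ∧ ∀ h : EuclideanSpace ℝ (Fin (n + 1)), 0 < ‖h‖ → ‖h‖ ≤ 1 → ∀ j : ℕ,
      volume {x : EuclideanSpace ℝ (Fin (n + 1)) |
          x ∈ lipDom ψ ∧ segment ℝ x (x + (k : ℝ) • h) ⊆ lipDom ψ ∧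
          (∀ y ∈ segment ℝ x (x + (k : ℝ) • h), (2 : ℝ) ^ (-(j : ℤ)) ≤ infDist y (lipGraph ψ)) ∧
          (∃ y ∈ segment ℝ x (x + (k : ℝ) • h), infDist y (lipGraph ψ) ≤ (2 : ℝ) ^ (1 - (j : ℤ)))}
        ≤ ENNReal.ofReal (C * (2 : ℝ) ^ (-(j : ℤ))) :=
  stmt_6_general n ψ L hψ k

end
end
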